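/- arXiv:0802.3300 — 3 statements merged into one kernel-verified Lean document; each statement's English description precedes it below -/
import Mathlib

section
/- Let U be the symmetric 3×3 matrix with rows (13, 0, −1), (0, 10, −1), (−1, −1, 0), and define the unit vectors a = (√(1/5), 0, √(4/5)), b = (0, √(1/4), √(3/4)), c = (√(4/5), 0, √(1/5)), d = (0, 1, 0) in ℝ³. Then aᵀUa = 9/5, bᵀUb = 5/2 − √3/2, cᵀUc = 48/5, and dᵀUd = 10; consequently aᵀUa > bᵀUb and dᵀUd > cᵀUc. -/
/-- The quadratic form `xᵀ U x`. -/
def quadForm {n : ℕ} (U : Matrix (Fin n) (Fin n) ℝ) (x : Fin n → ℝ) : ℝ :=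
  ∑ i, ∑ j, x i * U i j * x j

/-- the projective expected utilities of the four Allais lotteries
under the payoff matrix `U`, exhibiting the modal Allais pattern `A ≻ B`, `D ≻ C`. -/
theorem allais_projective_utilities :
    let U : Matrix (Fin 3) (Fin 3) ℝ := !![13, 0, -1; 0, 10, -1; -1, -1, 0]
    let a : Fin 3 → ℝ := ![Real.sqrt (1 / 5), 0, Real.sqrt (4 / 5)]
    let b : Fin 3 → ℝ := ![0, Real.sqrt (1 / 4), Real.sqrt (3 / 4)]
    let c : Fin 3 → ℝ := ![Real.sqrt (4 / 5), 0, Real.sqrt (1 / 5)]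
    let d : Fin 3 → ℝ := ![0, 1, 0]
    quadForm U a = 9 / 5 ∧
    quadForm U b = 5 / 2 - Real.sqrt 3 / 2 ∧
    quadForm U c = 48 / 5 ∧
    quadForm U d = 10 ∧
    quadForm U a > quadForm U b ∧
    quadForm U d > quadForm U c := by
  intro U a b c d
  have h15 : Real.sqrt (1/5) * Real.sqrt (1/5) = 1/5 := Real.mul_self_sqrt (by norm_num)
  have h45 : Real.sqrt (4/5) * Real.sqrt (4/5) = 4/5 := Real.mul_self_sqrt (by norm_num)
  have h14 : Real.sqrt (1/4) * Real.sqrt (1/4) = 1/4 := Real.mul_self_sqrt (by norm_num)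
  have h34 : Real.sqrt (3/4) * Real.sqrt (3/4) = 3/4 := Real.mul_self_sqrt (by norm_num)
  have hcross : Real.sqrt (1/5) * Real.sqrt (4/5) = 2/5 := by
    rw [← Real.sqrt_mul (by norm_num)]
    rw [show (1/5 : ℝ) * (4/5) = (2/5)^2 by norm_num]
    exact Real.sqrt_sq (by norm_num)
  have hcross2 : Real.sqrt (1/4) * Real.sqrt (3/4) = Real.sqrt 3 / 4 := by
    rw [← Real.sqrt_mul (by norm_num)]
    rw [show (1/4 : ℝ) * (3/4) = 3 * (1/16) by norm_num]
    rw [Real.sqrt_mul (by norm_num)]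
    rw [show (1/16 : ℝ) = (1/4)^2 by norm_num, Real.sqrt_sq (by norm_num)]
    ring
  have hs3 : Real.sqrt 3 < 2 := by
    nlinarith [Real.mul_self_sqrt (show (0:ℝ) ≤ 3 by norm_num), Real.sqrt_nonneg 3]
  have hs3' : (7:ℝ)/5 < Real.sqrt 3 := by
    nlinarith [Real.mul_self_sqrt (show (0:ℝ) ≤ 3 by norm_num), Real.sqrt_nonneg 3]
  have ha : quadForm U a = 9/5 := by
    simp only [quadForm, Fin.sum_univ_three, U, a, Matrix.cons_val_zero, Matrix.cons_val_one,
      Matrix.head_cons, Matrix.cons_val_two, Matrix.tail_cons, Matrix.cons_val',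
      Matrix.cons_val_fin_one, Matrix.empty_val', Matrix.head_fin_const, Matrix.of_apply]
    nlinarith [h15, h45, hcross]
  have hb : quadForm U b = 5/2 - Real.sqrt 3 / 2 := by
    simp only [quadForm, Fin.sum_univ_three, U, b, Matrix.cons_val_zero, Matrix.cons_val_one,
      Matrix.head_cons, Matrix.cons_val_two, Matrix.tail_cons, Matrix.cons_val',
      Matrix.cons_val_fin_one, Matrix.empty_val', Matrix.head_fin_const, Matrix.of_apply]
    nlinarith [h14, h34, hcross2]
  have hc : quadForm U c = 48/5 := by
    simp only [quadForm, Fin.sum_univ_three, U, c, Matrix.cons_val_zero, Matrix.cons_val_one,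
      Matrix.head_cons, Matrix.cons_val_two, Matrix.tail_cons, Matrix.cons_val',
      Matrix.cons_val_fin_one, Matrix.empty_val', Matrix.head_fin_const, Matrix.of_apply]
    nlinarith [h15, h45, hcross]
  have hd : quadForm U d = 10 := by
    simp only [quadForm, Fin.sum_univ_three, U, d, Matrix.cons_val_zero, Matrix.cons_val_one,
      Matrix.head_cons, Matrix.cons_val_two, Matrix.tail_cons, Matrix.cons_val',
      Matrix.cons_val_fin_one, Matrix.empty_val', Matrix.head_fin_const, Matrix.of_apply]
    ring
  refine ⟨ha, hb, hc, hd, ?_, ?_⟩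
  · rw [ha, hb]; linarith
  · rw [hc, hd]; norm_num
end

section
/- Let α ∈ ℝ, let U be the symmetric 2×2 matrix with rows (1, α) and (α, 0), let r = (√(1/3), √(2/3)), r̄ = (√(2/3), √(1/3)), w = (1, 0), l = (0, 1), and set u(R) := rᵀUr, u(R̄) := r̄ᵀUr̄, u(G) := (1/2) r̄ᵀUr̄ + (1/2) lᵀUl, u(Ḡ) := (1/2) rᵀUr + (1/2) wᵀUw. Then: u(R) > u(G) and u(R̄) > u(Ḡ) if and only if α > 0; u(G) > u(R) and u(Ḡ) > u(R̄) if and only if α < 0; and u(R) = u(G) and u(R̄) = u(Ḡ) if and only if α = 0. In particular, whenever α > 0 the projective expected utility preference exhibits the Ellsberg pattern R ≻ G and R̄ ≻ Ḡ. -/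
/-- in the projective resolution of the Ellsberg paradox, the sign of
the off-diagonal entry `α` exactly determines the preference between risk and
uncertainty: the Ellsberg pattern `R ≻ G` and `R̄ ≻ Ḡ` holds iff `α > 0`, the
opposite pattern iff `α < 0`, and indifference iff `α = 0`. -/
theorem ellsberg_pattern_iff_alpha (α : ℝ) :
    let U : Matrix (Fin 2) (Fin 2) ℝ := !![1, α; α, 0]
    let r : Fin 2 → ℝ := ![Real.sqrt (1 / 3), Real.sqrt (2 / 3)]
    let rbar : Fin 2 → ℝ := ![Real.sqrt (2 / 3), Real.sqrt (1 / 3)]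
    let w : Fin 2 → ℝ := ![1, 0]
    let l : Fin 2 → ℝ := ![0, 1]
    let uR : ℝ := quadForm U r
    let uRbar : ℝ := quadForm U rbar
    let uG : ℝ := (1 / 2) * quadForm U rbar + (1 / 2) * quadForm U l
    let uGbar : ℝ := (1 / 2) * quadForm U r + (1 / 2) * quadForm U w
    ((uR > uG ∧ uRbar > uGbar) ↔ α > 0) ∧
    ((uG > uR ∧ uGbar > uRbar) ↔ α < 0) ∧
    ((uR = uG ∧ uRbar = uGbar) ↔ α = 0) ∧
    (α > 0 → uR > uG ∧ uRbar > uGbar) := by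
  intro U r rbar w l uR uRbar uG uGbar
  have hst : Real.sqrt (1 / 3) * Real.sqrt (2 / 3) = Real.sqrt 2 / 3 := by
    rw [← Real.sqrt_mul (by norm_num), show (1/3:ℝ) * (2/3) = 2 / 3^2 by norm_num,
      Real.sqrt_div' 2 (by norm_num), Real.sqrt_sq (by norm_num)]
  have h1 : Real.sqrt (1 / 3) * Real.sqrt (1 / 3) = 1 / 3 :=
    Real.mul_self_sqrt (by norm_num)
  have h2 : Real.sqrt (2 / 3) * Real.sqrt (2 / 3) = 2 / 3 :=
    Real.mul_self_sqrt (by norm_num)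
  have hr : quadForm U r = 1 / 3 + 2 * α * (Real.sqrt 2 / 3) := by
    simp only [quadForm, Fin.sum_univ_two, U, r, Matrix.of_apply, Matrix.cons_val',
      Matrix.cons_val_zero, Matrix.cons_val_one, Matrix.head_cons, Matrix.empty_val',
      Matrix.cons_val_fin_one, Matrix.head_fin_const]
    linear_combination 2 * α * hst + h1
  have hrb : quadForm U rbar = 2 / 3 + 2 * α * (Real.sqrt 2 / 3) := by
    simp only [quadForm, Fin.sum_univ_two, U, rbar, Matrix.of_apply, Matrix.cons_val',
      Matrix.cons_val_zero, Matrix.cons_val_one, Matrix.head_cons, Matrix.empty_val',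
      Matrix.cons_val_fin_one, Matrix.head_fin_const]
    linear_combination 2 * α * hst + h2
  have hl : quadForm U l = 0 := by
    simp [quadForm, Fin.sum_univ_two, U, l]
  have hw : quadForm U w = 1 := by
    simp [quadForm, Fin.sum_univ_two, U, w]
  have hs : (0:ℝ) < Real.sqrt 2 := by positivity
  have hs' : Real.sqrt 2 ≠ 0 := ne_of_gt hs
  simp only [uR, uRbar, uG, uGbar, hr, hrb, hl, hw]
  refine ⟨⟨fun h => ?_, fun h => ?_⟩, ⟨fun h => ?_, fun h => ?_⟩,
    ⟨fun h => ?_, fun h => ?_⟩, fun h => ?_⟩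
  · nlinarith [h.1]
  · constructor <;> nlinarith
  · nlinarith [h.1]
  · constructor <;> nlinarith
  · have h0 : α * Real.sqrt 2 = 0 := by linarith [h.1]
    rcases mul_eq_zero.1 h0 with h' | h'
    · exact h'
    · exact absurd h' hs'
  · subst h; constructor <;> ring
  · constructor <;> nlinarith
end

section
/- Let n ≥ 2 and let i ≠ j be indices in {1,…,n}. (a) For every u ∈ ℝⁿ with u_i = u_j, the expected utility of the lottery (1/2)δ_i + (1/2)δ_j equals u_i; hence no von Neumann–Morgenstern expected utility preference can be indifferent between the two degenerate lotteries δ_i and δ_j while strictly preferring their equiprobable mixture. (b) There exists a symmetric n×n real matrix U such that e_iᵀUe_i = e_jᵀUe_j and ((e_i+e_j)/√2)ᵀ U ((e_i+e_j)/√2) > e_iᵀUe_i; hence projective expected utility can exhibit indifference between two outcomes together with strict preference for receiving them with equal probability. -/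
lemma quad_eval {n : ℕ} (i j : Fin n) (hij : i ≠ j) (x : Fin n → ℝ) :
    quadForm (fun k l => if k = i ∧ l = j then (1:ℝ) else if k = j ∧ l = i then 1 else 0) x
      = 2 * (x i * x j) := by
  have hU : ∀ k l : Fin n,
      (if k = i ∧ l = j then (1:ℝ) else if k = j ∧ l = i then 1 else 0) =
      (if k = i then (1:ℝ) else 0) * (if l = j then 1 else 0) +
        (if k = j then 1 else 0) * (if l = i then 1 else 0) := by
    intro k l
    split_ifs <;> simp_all
  simp only [quadForm, hU]
  simp [mul_add, add_mul, Finset.sum_add_distrib, ite_mul, mul_ite, Finset.sum_ite_eq']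
  ring

/-- (a) under von Neumann–Morgenstern expected utility, the
equiprobable mixture of two indifferent degenerate lotteries has the same expected
utility, so no expected-utility preference is indifferent between `δ_i` and `δ_j`
while strictly preferring their equiprobable mixture; (b) projective expected
utility can exhibit this pattern: some symmetric `U` gives `e_i` and `e_j` equal
utility but strictly higher utility to `(e_i + e_j)/√2`. -/
theorem mixture_preference_vnm_vs_projective
    (n : ℕ) (hn : 2 ≤ n) (i j : Fin n) (hij : i ≠ j) :
    -- (a) expected utility of the equiprobable mixture equals the common utility
    ((∀ u : Fin n → ℝ, u i = u j →
        ∑ k, u k * ((1 / 2) * (if k = i then (1:ℝ) else 0) +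
          (1 / 2) * (if k = j then 1 else 0)) = u i) ∧
      -- hence no vNM preference exhibits indifference plus strict mixture preference
      ¬ ∃ u : Fin n → ℝ,
          (∑ k, u k * (if k = i then (1:ℝ) else 0) =
            ∑ k, u k * (if k = j then (1:ℝ) else 0)) ∧
          ∑ k, u k * ((1 / 2) * (if k = i then (1:ℝ) else 0) +
              (1 / 2) * (if k = j then 1 else 0)) >
            ∑ k, u k * (if k = i then (1:ℝ) else 0)) ∧
    -- (b) projective expected utility can exhibit the pattern
    (∃ U : Matrix (Fin n) (Fin n) ℝ, U.IsSymm ∧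
      quadForm U (fun k => if k = i then (1:ℝ) else 0) =
        quadForm U (fun k => if k = j then (1:ℝ) else 0) ∧
      quadForm U
          (fun k => ((if k = i then (1:ℝ) else 0) + (if k = j then 1 else 0)) /
            Real.sqrt 2) >
        quadForm U (fun k => if k = i then (1:ℝ) else 0)) := by
  have sum_i : ∀ u : Fin n → ℝ, ∑ k, u k * (if k = i then (1:ℝ) else 0) = u i := by
    intro u; simp [mul_ite, Finset.sum_ite_eq']
  have sum_j : ∀ u : Fin n → ℝ, ∑ k, u k * (if k = j then (1:ℝ) else 0) = u j := by
    intro u; simp [mul_ite, Finset.sum_ite_eq']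
  have sum_mix : ∀ u : Fin n → ℝ,
      ∑ k, u k * ((1 / 2) * (if k = i then (1:ℝ) else 0) +
        (1 / 2) * (if k = j then 1 else 0)) = u i / 2 + u j / 2 := by
    intro u
    simp [mul_add, Finset.sum_add_distrib, mul_ite, Finset.sum_ite_eq', mul_comm]
    ring
  refine ⟨⟨fun u hu => by rw [sum_mix, hu]; ring, ?_⟩, ?_⟩
  · rintro ⟨u, heq, hgt⟩
    rw [sum_i, sum_j] at heq
    rw [sum_mix, sum_i, heq] at hgt
    linarith
  · refine ⟨fun k l => if k = i ∧ l = j then (1:ℝ) else if k = j ∧ l = i then 1 else 0,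
      ?_, ?_, ?_⟩
    · ext k l
      show (if l = i ∧ k = j then (1:ℝ) else if l = j ∧ k = i then 1 else 0) =
        (if k = i ∧ l = j then (1:ℝ) else if k = j ∧ l = i then 1 else 0)
      split_ifs <;> simp_all
    · rw [quad_eval _ _ hij, quad_eval _ _ hij]
      simp [hij, hij.symm]
    · rw [quad_eval _ _ hij, quad_eval _ _ hij]
      have h2 : Real.sqrt 2 * Real.sqrt 2 = 2 := Real.mul_self_sqrt (by norm_num)
      simp only [if_pos rfl, if_neg hij, if_neg hij.symm, add_zero, zero_add]
      simp [h2]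
end
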